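/- Let A be a unital *-algebra, q a nonzero real number, n ≥ 0, and let x₁, …, x_{n+1} ∈ A satisfy the defining relations of S_q^{2n+1}: x_i x_j = q x_j x_i for 1 ≤ i < j ≤ n+1; x_i* x_j = q x_j x_i* for i ≠ j; x_i x_i* − x_i* x_i = (1 − q^{−2}) s_{i−1} where s₀ := 0 and s_i := s_{i−1} + x_i* x_i; and s_{n+1} = 1. Define matrices V_{(2k+1)} ∈ Mat_{2^k}(A) recursively by V_{(1)} := x₁ and V_{(2k+1)} := [[x_{k+1}·I, q^{−1} V_{(2k−1)}], [−V_{(2k−1)}*, x_{k+1}*·I]] (2×2 block form, V* the conjugate transpose). Then V_{(2n+1)} is unitary: V_{(2n+1)} V_{(2n+1)}* = V_{(2n+1)}* V_{(2n+1)} = I_{2^n}. -/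
import Mathlib

open Matrix

/-- The partial radii `s₀ = 0`, `s_i = s_{i−1} + x_i* x_i` of the odd quantum
Euclidean sphere `S_q^{2n+1}` (generators `x₁, …, x_{n+1}`). -/
def partialRadiusOdd {A : Type*} [Ring A] [Star A] (x : ℕ → A) : ℕ → A
  | 0 => 0
  | (i + 1) => partialRadiusOdd x i + star (x (i + 1)) * x (i + 1)

/-- The canonical matrices `V_{(2k+1)}` of the odd quantum Euclidean sphere,
defined recursively by `V_{(1)} = x₁` and
`V_{(2k+1)} = [[x_{k+1}·I, q⁻¹ V_{(2k−1)}], [−V_{(2k−1)}*, x_{k+1}*·I]]`. -/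
noncomputable def vMat {A : Type*} [Ring A] [Algebra ℝ A] [StarRing A]
    (q : ℝ) (x : ℕ → A) : (k : ℕ) → Matrix (Fin (2 ^ k)) (Fin (2 ^ k)) A
  | 0 => Matrix.of fun _ _ => x 1
  | (k + 1) =>
    Matrix.reindex (finSumFinEquiv.trans (finCongr (by rw [pow_succ, mul_two])))
      (finSumFinEquiv.trans (finCongr (by rw [pow_succ, mul_two])))
      (Matrix.fromBlocks (x (k + 2) • 1) (q⁻¹ • vMat q x k)
        (-(vMat q x k)ᴴ) (star (x (k + 2)) • 1))

set_option linter.unusedSectionVars false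
set_option maxHeartbeats 1000000

namespace QSAux
section
variable {A : Type*} [Ring A] [Algebra ℝ A] [StarRing A]

lemma staralg_comm (r : ℝ) (y : A) :
    star (algebraMap ℝ A r) * y = y * star (algebraMap ℝ A r) := by
  have h := congrArg star (Algebra.commutes r (star y))
  simpa [StarMul.star_mul] using h.symm

lemma star_rsmul (r : ℝ) (v : A) :
    star (r • v) = star (algebraMap ℝ A r) * star v := by
  rw [Algebra.smul_def, StarMul.star_mul, ← staralg_comm]

lemma cmove {c : A} (hc : ∀ y : A, c * y = y * c) (u v : A) :
    c * (u * v) = u * (c * v) := by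
  rw [← mul_assoc, hc u, mul_assoc]

lemma ckill_head {c w : A} (hc : ∀ y : A, c * y = y * c) (h : c * w = 0) (u : A) :
    c * (u * w) = 0 := by
  rw [cmove hc, h, mul_zero]

lemma ckill_tail {c v1 v2 : A} (h : c * (v1 * v2) = 0) (z : A) :
    c * (v1 * (v2 * z)) = 0 := by
  rw [← mul_assoc v1, ← mul_assoc c, h, zero_mul]

lemma ce1 {q : ℝ} (hq : q ≠ 0) :
    star (algebraMap ℝ A q⁻¹) * star (algebraMap ℝ A q) = (1 : A) := by
  rw [← StarMul.star_mul, ← _root_.map_mul, mul_inv_cancel₀ hq, _root_.map_one, star_one]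

lemma smul_one_conjT (a : A) {m : Type*} [Fintype m] [DecidableEq m] :
    (a • (1 : Matrix m m A))ᴴ = star a • 1 := by
  rw [Matrix.smul_one_eq_diagonal, Matrix.diagonal_conjTranspose, Matrix.smul_one_eq_diagonal]
  congr

lemma reindexCT {p p' : Type*} (e : p ≃ p') (B : Matrix p p A) :
    (Matrix.reindex e e B)ᴴ = Matrix.reindex e e Bᴴ := by
  rw [Matrix.reindex_apply, Matrix.reindex_apply, Matrix.conjTranspose_submatrix]

lemma reindex_mul_eq_smul_one {p p' : Type*} [Fintype p] [Fintype p'] [DecidableEq p]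
    [DecidableEq p'] (e : p ≃ p') (M N : Matrix p p A) (s : A) (h : M * N = s • 1) :
    (Matrix.reindex e e M) * (Matrix.reindex e e N) = s • 1 := by
  rw [Matrix.reindex_apply, Matrix.reindex_apply, Matrix.submatrix_mul_equiv, h]
  ext i j
  simp [Matrix.submatrix_apply, Matrix.smul_apply, Matrix.one_apply,
    EmbeddingLike.apply_eq_iff_eq]

lemma diag_mul_diag {m : Type*} [Fintype m] [DecidableEq m] (b c : A) :
    (b • (1 : Matrix m m A)) * (c • 1) = (b * c) • 1 := by
  rw [Matrix.smul_mul, Matrix.one_mul, smul_smul]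

variable (q : ℝ) (n : ℕ) (x : ℕ → A)

/-- the central "defect" element `E - E'`. -/
noncomputable abbrev wd : A := algebraMap ℝ A q - star (algebraMap ℝ A q)

lemma wd_comm (y : A) : wd q * y = y * (wd q : A) := by
  rw [sub_mul, mul_sub, Algebra.commutes, staralg_comm]

section defects
variable (hq : q ≠ 0)
  (hcomm : ∀ i j, 1 ≤ i → i < j → j ≤ n + 1 → x i * x j = q • (x j * x i))
  (hstar : ∀ i j, 1 ≤ i → 1 ≤ j → i ≤ n + 1 → j ≤ n + 1 → i ≠ j →
      star (x i) * x j = q • (x j * star (x i)))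
  (hrel : ∀ i, i ≤ n →
      x (i + 1) * star (x (i + 1)) - star (x (i + 1)) * x (i + 1)
        = (1 - q⁻¹ ^ 2) • partialRadiusOdd x i)
  (hnorm : partialRadiusOdd x (n + 1) = 1)

include hstar in
lemma d1a (i j : ℕ) (hi : 1 ≤ i) (hj : 1 ≤ j) (hi' : i ≤ n + 1) (hj' : j ≤ n + 1)
    (hij : i ≠ j) : wd q * (x i * star (x j)) = 0 := by
  have h1 : star (x j) * x i = q • (x i * star (x j)) := hstar j i hj hi hj' hi' (Ne.symm hij)
  have h2 := congrArg star (hstar i j hi hj hi' hj' hij)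
  rw [StarMul.star_mul, star_star, star_rsmul, StarMul.star_mul, star_star] at h2
  rw [h1, Algebra.smul_def] at h2
  rw [sub_mul, h2, sub_self]

include hstar in
lemma d1b (i j : ℕ) (hi : 1 ≤ i) (hj : 1 ≤ j) (hi' : i ≤ n + 1) (hj' : j ≤ n + 1)
    (hij : i ≠ j) : wd q * (star (x i) * x j) = 0 := by
  have h1 : star (x i) * x j = algebraMap ℝ A q * (x j * star (x i)) := by
    rw [← Algebra.smul_def]; exact hstar i j hi hj hi' hj' hij
  rw [h1, ← mul_assoc, wd_comm q (algebraMap ℝ A q), mul_assoc,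
    d1a q n x hstar j i hj hi hj' hi' (Ne.symm hij), mul_zero]

/-- push a multiplication through the partial radius sum -/
lemma mul_prad (w y : A) (N : ℕ)
    (h : ∀ m, 1 ≤ m → m ≤ N → w * (y * (star (x m) * x m)) = 0) :
    w * (y * partialRadiusOdd x N) = 0 := by
  induction N with
  | zero => simp [partialRadiusOdd]
  | succ N ih =>
    rw [partialRadiusOdd, mul_add, mul_add,
      ih (fun m h1 h2 => h m h1 (h2.trans (Nat.le_succ N))),
      h (N + 1) (Nat.succ_le_succ (Nat.zero_le N)) le_rfl, add_zero]

include hcomm hstar hnorm in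
lemma d3 (i j : ℕ) (hi : 1 ≤ i) (hij : i < j) (hj : j ≤ n + 1) :
    wd q * (x i * x j) = 0 := by
  have hj1 : 1 ≤ j := hi.trans hij.le
  have key : wd q * ((x i * x j) * partialRadiusOdd x (n + 1)) = 0 := by
    apply mul_prad
    intro m h1 h2
    by_cases hmj : m = j
    · subst hmj
      rw [hcomm i m hi hij hj]
      simp only [smul_mul_assoc, mul_smul_comm, mul_assoc]
      rw [ckill_head (wd_comm q)
        (ckill_tail (d1a q n x hstar i m hi h1 (hij.le.trans hj) h2 (Nat.ne_of_lt hij)) (x m))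
        (x m), smul_zero]
    · simp only [mul_assoc]
      exact ckill_head (wd_comm q)
        (ckill_tail (d1a q n x hstar j m hj1 h1 hj h2 (fun h => hmj h.symm)) (x m)) (x i)
  rw [hnorm, mul_one] at key
  exact key

include hq hcomm hstar hrel hnorm in
lemma d2 (i j : ℕ) (hi : 1 ≤ i) (hij : i < j) (hj : j ≤ n + 1) :
    wd q * (star (x i) * star (x j)) = 0 := by
  obtain ⟨jj, rfl⟩ : ∃ jj, j = jj + 1 := ⟨j - 1, by omega⟩
  have hj1 : 1 ≤ jj + 1 := by omega
  have hsc : ∀ a b, 1 ≤ a → a < b → b ≤ n + 1 →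
      star (x b) * star (x a) = star (algebraMap ℝ A q) * (star (x a) * star (x b)) := by
    intro a b h1 h2 h3
    have h := congrArg star (hcomm a b h1 h2 h3)
    rw [StarMul.star_mul, star_rsmul, StarMul.star_mul] at h
    exact h
  have horder : ∀ m, 1 ≤ m → m ≤ n + 1 → m ≠ jj + 1 → ∃ γ : A, (∀ y, γ * y = y * γ) ∧
      star (x (jj + 1)) * star (x m) = γ * (star (x m) * star (x (jj + 1))) := by
    intro m h1 h2 hm
    rcases lt_or_gt_of_ne hm with hlt | hgt
    · exact ⟨star (algebraMap ℝ A q), staralg_comm q, hsc m (jj + 1) h1 hlt hj⟩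
    · refine ⟨star (algebraMap ℝ A q⁻¹), staralg_comm q⁻¹, ?_⟩
      have h := hsc (jj + 1) m hj1 hgt h2
      rw [h, ← mul_assoc, ce1 hq, one_mul]
  have hkill : ∀ m, 1 ≤ m → m ≤ n + 1 → m ≠ jj + 1 →
      wd q * ((star (x i) * star (x (jj + 1))) * (star (x m) * x m)) = 0 := by
    intro m h1 h2 hm
    obtain ⟨γ, hγ, hord⟩ := horder m h1 h2 hm
    have hrw : star (x (jj + 1)) * (star (x m) * x m)
        = γ * (star (x m) * (star (x (jj + 1)) * x m)) := by
      rw [← mul_assoc, hord, mul_assoc, mul_assoc]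
    simp only [mul_assoc]
    rw [hrw, ← cmove hγ (star (x i)), ← cmove hγ (wd q),
      ckill_head (wd_comm q)
        (ckill_head (wd_comm q) (d1b q n x hstar (jj + 1) m hj1 h1 hj h2 hm.symm) (star (x m)))
        (star (x i)), mul_zero]
  have key : wd q * ((star (x i) * star (x (jj + 1))) * partialRadiusOdd x (n + 1)) = 0 := by
    apply mul_prad
    intro m h1 h2
    by_cases hm : m = jj + 1
    · subst hm
      have hsub : star (x (jj + 1)) * x (jj + 1)
          = x (jj + 1) * star (x (jj + 1)) - (1 - q⁻¹ ^ 2) • partialRadiusOdd x jj := by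
        rw [← hrel jj (by omega)]
        exact (sub_sub_cancel _ _).symm
      rw [hsub, mul_sub, mul_sub]
      have hA : wd q * (star (x i) * star (x (jj + 1)) * (x (jj + 1) * star (x (jj + 1)))) = 0 := by
        have hfront : star (x i) * star (x (jj + 1))
            = star (algebraMap ℝ A q⁻¹) * (star (x (jj + 1)) * star (x i)) := by
          rw [hsc i (jj + 1) hi hij hj, ← mul_assoc, ce1 hq, one_mul]
        rw [hfront]
        simp only [mul_assoc]
        rw [← cmove (staralg_comm q⁻¹) (wd q),
          ckill_head (wd_comm q)
            (ckill_tail (d1b q n x hstar i (jj + 1) hi hj1 (hij.le.trans hj) hj (Nat.ne_of_lt hij))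
              (star (x (jj + 1)))) (star (x (jj + 1))), mul_zero]
      have hB : wd q * (star (x i) * star (x (jj + 1))
          * ((1 - q⁻¹ ^ 2) • partialRadiusOdd x jj)) = 0 := by
        have hB' : wd q * (star (x i) * star (x (jj + 1)) * partialRadiusOdd x jj) = 0 :=
          mul_prad x (wd q) _ jj (fun m' hm1 hm2 => hkill m' hm1 (by omega) (by omega))
        rw [mul_smul_comm, mul_smul_comm, hB', smul_zero]
      rw [hA, hB, sub_zero]
    · exact hkill m h1 h2 hm
  rw [hnorm, mul_one] at key
  exact key

include hq hcomm hstar hrel hnorm in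
lemma dz (i : ℕ) (hi : i ≤ n) : wd q * partialRadiusOdd x i = 0 := by
  by_cases hq1 : (1 : ℝ) - q⁻¹ ^ 2 = 0
  · have h2 : q⁻¹ * q⁻¹ = 1 := by
      have : q⁻¹ ^ 2 = 1 := by linarith
      rwa [pow_two] at this
    have hcase : q = 1 ∨ q = -1 := by
      rcases mul_self_eq_one_iff.mp h2 with h | h
      · left; rwa [inv_eq_one] at h
      · right; rw [← inv_inv q, h, inv_neg, inv_one]
    have hw : wd q = (0 : A) := by
      rcases hcase with h | h <;> rw [h] <;>
        simp [wd, _root_.map_one, _root_.map_neg, star_neg, star_one]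
    rw [hw, zero_mul]
  · have sxm : ∀ N, N ≤ n → ∀ m, N < m → m ≤ n + 1 →
        wd q * (partialRadiusOdd x N * x m) = 0 := by
      intro N
      induction N with
      | zero => intro _ m _ _; simp [partialRadiusOdd]
      | succ N ih =>
        intro hN m hlt hm
        rw [partialRadiusOdd, add_mul, mul_add, ih (by omega) m (by omega) hm, zero_add]
        simp only [mul_assoc]
        rw [hcomm (N + 1) m (by omega) hlt hm]
        simp only [mul_smul_comm, smul_mul_assoc]
        rw [ckill_tail (d1b q n x hstar (N + 1) m (by omega) (by omega) (by omega) hm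
          (by omega)) (x (N + 1)), smul_zero]
    have sym : ∀ N, N ≤ n → ∀ m, N < m → m ≤ n + 1 →
        wd q * (partialRadiusOdd x N * star (x m)) = 0 := by
      intro N
      induction N with
      | zero => intro _ m _ _; simp [partialRadiusOdd]
      | succ N ih =>
        intro hN m hlt hm
        rw [partialRadiusOdd, add_mul, mul_add, ih (by omega) m (by omega) hm, zero_add]
        simp only [mul_assoc]
        exact ckill_head (wd_comm q)
          (d1a q n x hstar (N + 1) m (by omega) (by omega) (by omega) hm (by omega))
          (star (x (N + 1)))
    have zt : ∀ m, i < m → m ≤ n + 1 →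
        (wd q * partialRadiusOdd x i) * (star (x m) * x m) = 0 := by
      intro m h1 h2
      rw [mul_assoc (wd q), ← mul_assoc (partialRadiusOdd x i), ← mul_assoc (wd q),
        sym i hi m h1 h2, zero_mul]
    have zstep : ∀ d, i + d ≤ n + 1 →
        (wd q * partialRadiusOdd x i) * partialRadiusOdd x (i + d)
          = (wd q * partialRadiusOdd x i) * partialRadiusOdd x i := by
      intro d
      induction d with
      | zero => intro _; rfl
      | succ d ihd =>
        intro hd
        rw [show i + (d + 1) = (i + d) + 1 from rfl, partialRadiusOdd, mul_add,
          ihd (by omega), zt (i + d + 1) (by omega) (by omega), add_zero]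
    have hz1 : wd q * partialRadiusOdd x i
        = (wd q * partialRadiusOdd x i) * partialRadiusOdd x i := by
      conv_lhs => rw [← mul_one (wd q * partialRadiusOdd x i), ← hnorm,
        show n + 1 = i + (n + 1 - i) by omega]
      exact zstep (n + 1 - i) (by omega)
    have h2 : (wd q * partialRadiusOdd x i) * (x (i + 1) * star (x (i + 1))) = 0 := by
      rw [mul_assoc (wd q), ← mul_assoc (partialRadiusOdd x i), ← mul_assoc (wd q),
        sxm i hi (i + 1) (by omega) (by omega), zero_mul]
    have h3 : (wd q * partialRadiusOdd x i) * (star (x (i + 1)) * x (i + 1)) = 0 :=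
      zt (i + 1) (by omega) (by omega)
    have h4 : (0 : A) = (1 - q⁻¹ ^ 2) • (wd q * partialRadiusOdd x i) := by
      have h := congrArg (fun t => wd q * partialRadiusOdd x i * t) (hrel i hi)
      simp only [mul_sub] at h
      rw [h2, h3, sub_self] at h
      rw [h, mul_smul_comm, ← hz1]
    have h5 : wd q * partialRadiusOdd x i
        = (1 - q⁻¹ ^ 2)⁻¹ • ((1 - q⁻¹ ^ 2) • (wd q * partialRadiusOdd x i)) := by
      rw [smul_smul, inv_mul_cancel₀ hq1, one_smul]
    rw [h5, ← h4, smul_zero]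

include hq in
lemma ccid : star (algebraMap ℝ A q⁻¹) - algebraMap ℝ A q⁻¹
    = algebraMap ℝ A q⁻¹ * star (algebraMap ℝ A q⁻¹) * wd q := by
  rw [mul_sub]
  congr 1
  · rw [mul_assoc, staralg_comm, ← mul_assoc, ← _root_.map_mul, inv_mul_cancel₀ hq,
      _root_.map_one, one_mul]
  · rw [mul_assoc, ← StarMul.star_mul, ← _root_.map_mul, mul_inv_cancel₀ hq,
      _root_.map_one, star_one, mul_one]

include hq hcomm hstar hrel hnorm in
lemma keyC (i : ℕ) (hi : i ≤ n) :
    star (algebraMap ℝ A q⁻¹) * partialRadiusOdd x i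
      = algebraMap ℝ A q⁻¹ * partialRadiusOdd x i := by
  have hz := dz q n x hq hcomm hstar hrel hnorm i hi
  have hcc := ccid (A := A) q hq
  have h0 : (star (algebraMap ℝ A q⁻¹) - algebraMap ℝ A q⁻¹) * partialRadiusOdd x i = 0 := by
    rw [hcc, mul_assoc, hz, mul_zero]
  rw [sub_mul] at h0
  exact sub_eq_zero.mp h0

section pred

/-- commutation predicate of an entry `v` against the generator `x m` -/
def Pred (q : ℝ) (x : ℕ → A) (m : ℕ) (v : A) : Prop :=
  x m * v = q⁻¹ • (v * x m) ∧
  star (x m) * v = q • (v * star (x m)) ∧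
  star (x m) * v = star (algebraMap ℝ A q) * (v * star (x m)) ∧
  (star (algebraMap ℝ A q⁻¹) - algebraMap ℝ A q⁻¹) * (v * x m) = 0

lemma Pred_zero (m : ℕ) : Pred q x m (0 : A) := by
  simp [Pred]

lemma Pred_neg {m : ℕ} {v : A} (h : Pred q x m v) : Pred q x m (-v) := by
  obtain ⟨h1, h2, h3, h4⟩ := h
  refine ⟨?_, ?_, ?_, ?_⟩ <;>
    simp only [mul_neg, neg_mul, smul_neg, neg_eq_zero, neg_inj]
  exacts [h1, h2, h3, h4]

lemma Pred_smul {m : ℕ} {v : A} (r : ℝ) (h : Pred q x m v) : Pred q x m (r • v) := by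
  obtain ⟨h1, h2, h3, h4⟩ := h
  refine ⟨?_, ?_, ?_, ?_⟩
  · rw [mul_smul_comm, h1, smul_mul_assoc, smul_comm]
  · rw [mul_smul_comm, h2, smul_mul_assoc, smul_comm]
  · rw [mul_smul_comm, h3, smul_mul_assoc, mul_smul_comm]
  · rw [smul_mul_assoc, mul_smul_comm, h4, smul_zero]

lemma Pred_cstar_mul {m : ℕ} {v : A} (h : Pred q x m v) :
    Pred q x m (star (algebraMap ℝ A q⁻¹) * v) := by
  obtain ⟨h1, h2, h3, h4⟩ := h
  have hγ := staralg_comm (A := A) q⁻¹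
  have hsub : ∀ y : A, (star (algebraMap ℝ A q⁻¹) - algebraMap ℝ A q⁻¹) * y
      = y * (star (algebraMap ℝ A q⁻¹) - algebraMap ℝ A q⁻¹) := by
    intro y; rw [sub_mul, mul_sub, staralg_comm, Algebra.commutes]
  refine ⟨?_, ?_, ?_, ?_⟩
  · rw [← cmove hγ, h1, mul_smul_comm, mul_assoc]
  · rw [← cmove hγ, h2, mul_smul_comm, mul_assoc]
  · rw [← cmove hγ, h3, mul_assoc, cmove hγ]
  · rw [mul_assoc, cmove hsub, h4, mul_zero]

end pred

section predgen
variable (hq : q ≠ 0)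
  (hcomm : ∀ i j, 1 ≤ i → i < j → j ≤ n + 1 → x i * x j = q • (x j * x i))
  (hstar : ∀ i j, 1 ≤ i → 1 ≤ j → i ≤ n + 1 → j ≤ n + 1 → i ≠ j →
      star (x i) * x j = q • (x j * star (x i)))
  (hrel : ∀ i, i ≤ n →
      x (i + 1) * star (x (i + 1)) - star (x (i + 1)) * x (i + 1)
        = (1 - q⁻¹ ^ 2) • partialRadiusOdd x i)
  (hnorm : partialRadiusOdd x (n + 1) = 1)

include hq hcomm hstar hnorm in
lemma pred_x (j m : ℕ) (hj : 1 ≤ j) (hjm : j < m) (hm : m ≤ n + 1) : Pred q x m (x j) := by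
  have hm1 : 1 ≤ m := by omega
  refine ⟨?_, ?_, ?_, ?_⟩
  · rw [hcomm j m hj hjm hm, smul_smul, inv_mul_cancel₀ hq, one_smul]
  · exact hstar m j hm1 hj hm (by omega) (by omega)
  · have h2 := hstar m j hm1 hj hm (by omega) (by omega)
    rw [Algebra.smul_def] at h2
    rw [h2]
    have hd := d1a q n x hstar j m hj hm1 (by omega) hm (by omega)
    rw [sub_mul] at hd
    exact sub_eq_zero.mp hd
  · have hd := d3 q n x hcomm hstar hnorm j m hj hjm hm
    rw [ccid q hq, mul_assoc, hd, mul_zero]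

include hq hcomm hstar hrel hnorm in
lemma pred_y (j m : ℕ) (hj : 1 ≤ j) (hjm : j < m) (hm : m ≤ n + 1) :
    Pred q x m (star (x j)) := by
  have hm1 : 1 ≤ m := by omega
  have hsc : star (x m) * star (x j)
      = star (algebraMap ℝ A q) * (star (x j) * star (x m)) := by
    have h := congrArg star (hcomm j m hj hjm hm)
    rw [StarMul.star_mul, star_rsmul, StarMul.star_mul] at h
    exact h
  refine ⟨?_, ?_, ?_, ?_⟩
  · rw [hstar j m hj hm1 (by omega) hm (by omega), smul_smul, inv_mul_cancel₀ hq, one_smul]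
  · rw [hsc, Algebra.smul_def]
    have hd := d2 q n x hq hcomm hstar hrel hnorm j m hj hjm hm
    rw [sub_mul] at hd
    exact (sub_eq_zero.mp hd).symm
  · exact hsc
  · have hd := d1b q n x hstar j m hj hm1 (by omega) hm (by omega)
    rw [ccid q hq, mul_assoc, hd, mul_zero]

include hq hcomm hstar hrel hnorm in
lemma entries : ∀ k m, k + 2 ≤ m → m ≤ n + 1 → ∀ i j,
    Pred q x m (vMat q x k i j) ∧ Pred q x m ((vMat q x k)ᴴ i j) := by
  intro k
  induction k with
  | zero =>
    intro m h2 hm i j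
    constructor
    · simpa only [vMat, Matrix.of_apply] using
        pred_x q n x hq hcomm hstar hnorm 1 m le_rfl (by omega) hm
    · simpa only [vMat, Matrix.conjTranspose_apply, Matrix.of_apply] using
        pred_y q n x hq hcomm hstar hrel hnorm 1 m le_rfl (by omega) hm
  | succ k ih =>
    intro m h2 hm i j
    have hx := pred_x q n x hq hcomm hstar hnorm (k + 2) m (by omega) (by omega) hm
    have hy := pred_y q n x hq hcomm hstar hrel hnorm (k + 2) m (by omega) (by omega) hm
    have ihk := ih m (by omega) hm
    have hB : ∀ (p r : Fin (2 ^ k) ⊕ Fin (2 ^ k)),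
        Pred q x m ((Matrix.fromBlocks (x (k + 2) • 1) (q⁻¹ • vMat q x k)
          (-(vMat q x k)ᴴ) (star (x (k + 2)) • 1)) p r) ∧
        Pred q x m (star ((Matrix.fromBlocks (x (k + 2) • 1) (q⁻¹ • vMat q x k)
          (-(vMat q x k)ᴴ) (star (x (k + 2)) • 1)) r p)) := by
      intro p r
      rcases p with p | p <;> rcases r with r | r <;> constructor
      · simp only [Matrix.fromBlocks_apply₁₁, Matrix.smul_apply, Matrix.one_apply,
          smul_eq_mul, mul_ite, mul_one, mul_zero]
        split_ifs with h
        · exact hx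
        · exact Pred_zero q x m
      · simp only [Matrix.fromBlocks_apply₁₁, Matrix.smul_apply, Matrix.one_apply,
          smul_eq_mul, mul_ite, mul_one, mul_zero]
        split_ifs with h
        · exact hy
        · rw [star_zero]; exact Pred_zero q x m
      · simp only [Matrix.fromBlocks_apply₁₂, Matrix.smul_apply]
        exact Pred_smul q x q⁻¹ (ihk p r).1
      · simp only [Matrix.fromBlocks_apply₂₁, Matrix.neg_apply, Matrix.conjTranspose_apply,
          star_neg, star_star]
        exact Pred_neg q x (ihk p r).1
      · simp only [Matrix.fromBlocks_apply₂₁, Matrix.neg_apply]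
        exact Pred_neg q x (ihk p r).2
      · simp only [Matrix.fromBlocks_apply₁₂, Matrix.smul_apply, star_rsmul,
          Matrix.conjTranspose_apply]
        exact Pred_cstar_mul q x ((ihk p r).2)
      · simp only [Matrix.fromBlocks_apply₂₂, Matrix.smul_apply, Matrix.one_apply,
          smul_eq_mul, mul_ite, mul_one, mul_zero]
        split_ifs with h
        · exact hy
        · exact Pred_zero q x m
      · simp only [Matrix.fromBlocks_apply₂₂, Matrix.smul_apply, Matrix.one_apply,
          smul_eq_mul, mul_ite, mul_one, mul_zero]
        split_ifs with h
        · rw [star_star]; exact hx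
        · rw [star_zero]; exact Pred_zero q x m
    constructor
    · show Pred q x m (vMat q x (k + 1) i j)
      simp only [vMat, Matrix.reindex_apply, Matrix.submatrix_apply]
      exact (hB _ _).1
    · show Pred q x m ((vMat q x (k + 1))ᴴ i j)
      simp only [vMat, Matrix.reindex_apply, Matrix.conjTranspose_submatrix,
        Matrix.submatrix_apply, Matrix.conjTranspose_apply]
      exact (hB _ _).2

include hq hcomm hstar hrel hnorm in
lemma main : ∀ k, k ≤ n →
    vMat q x k * (vMat q x k)ᴴ = partialRadiusOdd x (k + 1) • 1 ∧
    (vMat q x k)ᴴ * vMat q x k = partialRadiusOdd x (k + 1) • 1 := by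
  intro k
  induction k with
  | zero =>
    intro _
    have h0 : x 1 * star (x 1) = star (x 1) * x 1 := by
      have h := hrel 0 (Nat.zero_le n)
      rw [show partialRadiusOdd x 0 = (0 : A) from rfl, smul_zero] at h
      exact sub_eq_zero.mp h
    have hs : partialRadiusOdd x 1 = star (x 1) * x 1 := by
      rw [show partialRadiusOdd x 1 = partialRadiusOdd x 0 + star (x 1) * x 1 from rfl,
        show partialRadiusOdd x 0 = (0 : A) from rfl, zero_add]
    have hsing : ∀ (c d : Fin (2 ^ 0)), c = d := by
      intro c d
      have hc := c.isLt
      have hd := d.isLt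
      norm_num at hc hd
      exact Fin.ext (by omega)
    constructor <;> ext i j <;> rw [hsing i j] <;>
      simp [vMat, Matrix.mul_apply, Matrix.conjTranspose_apply, Matrix.smul_apply,
        Matrix.one_apply, Finset.sum_const, Finset.card_univ, hs, h0]
  | succ k ihk =>
    intro hk1
    obtain ⟨IH1, IH2⟩ := ihk (by omega)
    have hent := entries q n x hq hcomm hstar hrel hnorm k (k + 2) le_rfl (by omega)
    have hW : ∀ i j, ((q⁻¹ • vMat q x k)ᴴ) i j
        = star (algebraMap ℝ A q⁻¹) * ((vMat q x k)ᴴ i j) := by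
      intro i j
      rw [Matrix.conjTranspose_apply, Matrix.smul_apply, star_rsmul, Matrix.conjTranspose_apply]
    have hkey := keyC q n x hq hcomm hstar hrel hnorm (k + 1) hk1
    have hscal : x (k + 2) * star (x (k + 2))
        + q⁻¹ • (star (algebraMap ℝ A q⁻¹) * partialRadiusOdd x (k + 1))
        = partialRadiusOdd x (k + 1 + 1) := by
      rw [hkey, ← Algebra.smul_def, smul_smul]
      have ha := sub_eq_iff_eq_add.mp (hrel (k + 1) hk1)
      rw [ha, show partialRadiusOdd x (k + 1 + 1)
          = partialRadiusOdd x (k + 1) + star (x (k + 1 + 1)) * x (k + 1 + 1) from rfl]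
      have hsm : (1 - q⁻¹ ^ 2) • partialRadiusOdd x (k + 1)
          + (q⁻¹ * q⁻¹) • partialRadiusOdd x (k + 1) = partialRadiusOdd x (k + 1) := by
        rw [← pow_two, ← add_smul, sub_add_cancel, one_smul]
      rw [add_right_comm ((1 - q⁻¹ ^ 2) • partialRadiusOdd x (k + 1))
        (star (x (k + 1 + 1)) * x (k + 1 + 1))
        ((q⁻¹ * q⁻¹) • partialRadiusOdd x (k + 1)), hsm]
    have hG11 : (x (k + 2) • (1 : Matrix (Fin (2 ^ k)) (Fin (2 ^ k)) A))
          * (star (x (k + 2)) • 1)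
        + (q⁻¹ • vMat q x k) * (q⁻¹ • vMat q x k)ᴴ
        = partialRadiusOdd x (k + 1 + 1) • 1 := by
      rw [diag_mul_diag, Matrix.smul_mul]
      ext i j
      simp only [Matrix.add_apply, Matrix.smul_apply, Matrix.mul_apply]
      have hterm : ∀ m' : Fin (2 ^ k), vMat q x k i m' * ((q⁻¹ • vMat q x k)ᴴ m' j)
          = star (algebraMap ℝ A q⁻¹) * (vMat q x k i m' * star (vMat q x k j m')) := by
        intro m'
        rw [hW, ← cmove (staralg_comm q⁻¹), Matrix.conjTranspose_apply]
      rw [Finset.sum_congr rfl fun m' _ => hterm m', ← Finset.mul_sum]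
      have hVV : (∑ m', vMat q x k i m' * star (vMat q x k j m'))
          = (partialRadiusOdd x (k + 1) • (1 : Matrix (Fin (2 ^ k)) (Fin (2 ^ k)) A)) i j := by
        rw [← IH1, Matrix.mul_apply]
        simp only [Matrix.conjTranspose_apply]
      rw [hVV]
      by_cases hij : i = j
      · subst hij
        simp only [Matrix.smul_apply, Matrix.one_apply_eq, smul_eq_mul, mul_one]
        exact hscal
      · simp [Matrix.smul_apply, Matrix.one_apply_ne hij]
    have hG12 : (x (k + 2) • (1 : Matrix (Fin (2 ^ k)) (Fin (2 ^ k)) A)) * (-(vMat q x k))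
        + (q⁻¹ • vMat q x k) * (x (k + 2) • 1) = 0 := by
      rw [Matrix.mul_neg, Matrix.smul_mul, Matrix.one_mul, Matrix.smul_mul]
      ext i j
      simp only [Matrix.add_apply, Matrix.neg_apply, Matrix.smul_apply, Matrix.zero_apply]
      rw [Matrix.smul_one_eq_diagonal, Matrix.mul_diagonal, smul_eq_mul,
        ← (hent i j).1.1, neg_add_cancel]
    have hG21 : (-(vMat q x k)ᴴ) * (star (x (k + 2)) • 1)
        + (star (x (k + 2)) • (1 : Matrix (Fin (2 ^ k)) (Fin (2 ^ k)) A))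
          * (q⁻¹ • vMat q x k)ᴴ = 0 := by
      rw [Matrix.neg_mul]
      ext i j
      simp only [Matrix.add_apply, Matrix.neg_apply, Matrix.zero_apply]
      rw [Matrix.smul_one_eq_diagonal, Matrix.mul_diagonal,
        Matrix.diagonal_mul, hW i j, ← cmove (staralg_comm q⁻¹), (hent i j).2.2.2.1,
        ← mul_assoc, ce1 hq, one_mul, neg_add_cancel]
    have hG22 : (-(vMat q x k)ᴴ) * (-(vMat q x k))
        + (star (x (k + 2)) • (1 : Matrix (Fin (2 ^ k)) (Fin (2 ^ k)) A)) * (x (k + 2) • 1)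
        = partialRadiusOdd x (k + 1 + 1) • 1 := by
      rw [neg_mul_neg, IH2, diag_mul_diag, ← add_smul]
      rfl
    have hH11 : (star (x (k + 2)) • (1 : Matrix (Fin (2 ^ k)) (Fin (2 ^ k)) A)) * (x (k + 2) • 1)
        + (-(vMat q x k)) * (-(vMat q x k)ᴴ) = partialRadiusOdd x (k + 1 + 1) • 1 := by
      rw [neg_mul_neg, IH1, diag_mul_diag, ← add_smul,
        add_comm (star (x (k + 2)) * x (k + 2)) (partialRadiusOdd x (k + 1))]
      rfl
    have hH12 : (star (x (k + 2)) • (1 : Matrix (Fin (2 ^ k)) (Fin (2 ^ k)) A)) * (q⁻¹ • vMat q x k)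
        + (-(vMat q x k)) * (star (x (k + 2)) • 1) = 0 := by
      rw [Matrix.mul_smul, Matrix.smul_mul, Matrix.one_mul, Matrix.neg_mul]
      ext i j
      simp only [Matrix.add_apply, Matrix.neg_apply, Matrix.smul_apply, Matrix.zero_apply]
      rw [Matrix.smul_one_eq_diagonal, Matrix.mul_diagonal, smul_eq_mul, (hent i j).1.2.1,
        smul_smul, inv_mul_cancel₀ hq, one_smul, add_neg_cancel]
    have hH21 : (q⁻¹ • vMat q x k)ᴴ * (x (k + 2) • 1)
        + (x (k + 2) • (1 : Matrix (Fin (2 ^ k)) (Fin (2 ^ k)) A)) * (-(vMat q x k)ᴴ) = 0 := by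
      rw [Matrix.mul_neg, Matrix.smul_mul, Matrix.one_mul]
      ext i j
      simp only [Matrix.add_apply, Matrix.neg_apply, Matrix.smul_apply, Matrix.zero_apply]
      rw [Matrix.smul_one_eq_diagonal, Matrix.mul_diagonal, hW i j, smul_eq_mul,
        (hent i j).2.1, Algebra.smul_def, mul_assoc, ← sub_eq_add_neg, ← sub_mul]
      exact (hent i j).2.2.2.2
    have hH22 : (q⁻¹ • vMat q x k)ᴴ * (q⁻¹ • vMat q x k)
        + (x (k + 2) • (1 : Matrix (Fin (2 ^ k)) (Fin (2 ^ k)) A)) * (star (x (k + 2)) • 1)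
        = partialRadiusOdd x (k + 1 + 1) • 1 := by
      rw [Matrix.mul_smul, diag_mul_diag]
      ext i j
      simp only [Matrix.add_apply, Matrix.smul_apply, Matrix.mul_apply]
      have hterm : ∀ m' : Fin (2 ^ k), ((q⁻¹ • vMat q x k)ᴴ) i m' * vMat q x k m' j
          = star (algebraMap ℝ A q⁻¹) * (star (vMat q x k m' i) * vMat q x k m' j) := by
        intro m'
        rw [hW, Matrix.conjTranspose_apply, mul_assoc]
      rw [Finset.sum_congr rfl fun m' _ => hterm m', ← Finset.mul_sum]
      have hVV : (∑ m', star (vMat q x k m' i) * vMat q x k m' j)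
          = (partialRadiusOdd x (k + 1) • (1 : Matrix (Fin (2 ^ k)) (Fin (2 ^ k)) A)) i j := by
        rw [← IH2, Matrix.mul_apply]
        simp only [Matrix.conjTranspose_apply]
      rw [hVV]
      by_cases hij : i = j
      · subst hij
        simp only [Matrix.smul_apply, Matrix.one_apply_eq, smul_eq_mul, mul_one]
        rw [add_comm]
        exact hscal
      · simp [Matrix.smul_apply, Matrix.one_apply_ne hij]
    have hBH' : (Matrix.fromBlocks (x (k + 2) • 1) (q⁻¹ • vMat q x k)
          (-(vMat q x k)ᴴ) (star (x (k + 2)) • 1))ᴴ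
        = Matrix.fromBlocks (star (x (k + 2)) • 1) (-(vMat q x k))
          ((q⁻¹ • vMat q x k)ᴴ) (x (k + 2) • 1) := by
      rw [Matrix.fromBlocks_conjTranspose, smul_one_conjT, smul_one_conjT, star_star,
        Matrix.conjTranspose_neg, Matrix.conjTranspose_conjTranspose]
    have hones : Matrix.fromBlocks
          (partialRadiusOdd x (k + 1 + 1) • (1 : Matrix (Fin (2 ^ k)) (Fin (2 ^ k)) A)) 0 0
          (partialRadiusOdd x (k + 1 + 1) • (1 : Matrix (Fin (2 ^ k)) (Fin (2 ^ k)) A))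
        = partialRadiusOdd x (k + 1 + 1) • 1 := by
      rw [← Matrix.fromBlocks_one, Matrix.fromBlocks_smul, smul_zero]
    have hBBH : (Matrix.fromBlocks (x (k + 2) • 1) (q⁻¹ • vMat q x k)
          (-(vMat q x k)ᴴ) (star (x (k + 2)) • 1))
        * (Matrix.fromBlocks (x (k + 2) • 1) (q⁻¹ • vMat q x k)
          (-(vMat q x k)ᴴ) (star (x (k + 2)) • 1))ᴴ
        = partialRadiusOdd x (k + 1 + 1) • 1 := by
      rw [hBH', Matrix.fromBlocks_multiply, hG11, hG12, hG21, hG22, hones]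
    have hBHB : (Matrix.fromBlocks (x (k + 2) • 1) (q⁻¹ • vMat q x k)
          (-(vMat q x k)ᴴ) (star (x (k + 2)) • 1))ᴴ
        * (Matrix.fromBlocks (x (k + 2) • 1) (q⁻¹ • vMat q x k)
          (-(vMat q x k)ᴴ) (star (x (k + 2)) • 1))
        = partialRadiusOdd x (k + 1 + 1) • 1 := by
      rw [hBH', Matrix.fromBlocks_multiply, hH11, hH12, hH21, hH22, hones]
    constructor
    · show vMat q x (k + 1) * (vMat q x (k + 1))ᴴ = _
      simp only [vMat]
      rw [reindexCT]
      exact reindex_mul_eq_smul_one _ _ _ _ hBBH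
    · show (vMat q x (k + 1))ᴴ * vMat q x (k + 1) = _
      simp only [vMat]
      rw [reindexCT]
      exact reindex_mul_eq_smul_one _ _ _ _ hBHB

end predgen
end defects
end
end QSAux

/-- If `x₁, …, x_{n+1}` satisfy the defining relations of the odd quantum Euclidean
sphere `S_q^{2n+1}`, then the canonical matrix `V_{(2n+1)}` is unitary. -/
theorem vMat_unitary
    (A : Type*) [Ring A] [Algebra ℝ A] [StarRing A]
    (q : ℝ) (hq : q ≠ 0) (n : ℕ) (x : ℕ → A)
    (hcomm : ∀ i j, 1 ≤ i → i < j → j ≤ n + 1 → x i * x j = q • (x j * x i))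
    (hstar : ∀ i j, 1 ≤ i → 1 ≤ j → i ≤ n + 1 → j ≤ n + 1 → i ≠ j →
      star (x i) * x j = q • (x j * star (x i)))
    (hrel : ∀ i, i ≤ n →
      x (i + 1) * star (x (i + 1)) - star (x (i + 1)) * x (i + 1)
        = (1 - q⁻¹ ^ 2) • partialRadiusOdd x i)
    (hnorm : partialRadiusOdd x (n + 1) = 1) :
    vMat q x n * (vMat q x n)ᴴ = 1 ∧ (vMat q x n)ᴴ * vMat q x n = 1 := by
  obtain ⟨h1, h2⟩ := QSAux.main q n x hq hcomm hstar hrel hnorm n le_rfl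
  rw [hnorm, one_smul] at h1 h2
  exact ⟨h1, h2⟩
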